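/- arXiv:2305.17236 — 11 statements merged into one kernel-verified Lean document; each statement's English description precedes it below -/
import Mathlib

section
/- Let C be a monoidal category and let A and B be monoid objects in C. Suppose there are morphisms of monoid objects i : A ⟶ B and r : B ⟶ A with i ≫ r = 𝟙_A (a retraction diagram in Mon_ C). If B is separable, then A is separable. -/
/-! If `σ` is a bimodule section of the multiplication of `B`, then `i ≫ σ ≫ (r ⊗ r)` is one
for `A`: as `i` and `r` are monoid morphisms, `i ⊗ i` and `r ⊗ r` move across the multiplications,
and what is left over is a single factor `i ≫ r = 𝟙`. -/

open CategoryTheory MonoidalCategory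

/-- A monoid object `A` in a monoidal category is *separable* if its multiplication
`μ : A ⊗ A ⟶ A` admits a section `σ : A ⟶ A ⊗ A` which is a morphism of
`A`-bimodule objects from `A` to the free bimodule `A ⊗ A`. -/
def Mon_.IsSeparable {C : Type*} [Category C] [MonoidalCategory C] (A : Mon C) : Prop :=
  ∃ σ : A.X ⟶ A.X ⊗ A.X,
    σ ≫ MonObj.mul (X := A.X) = 𝟙 A.X ∧
    MonObj.mul (X := A.X) ≫ σ = (A.X ◁ σ) ≫ (α_ A.X A.X A.X).inv ≫ (MonObj.mul (X := A.X) ▷ A.X) ∧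
    MonObj.mul (X := A.X) ≫ σ = (σ ▷ A.X) ≫ (α_ A.X A.X A.X).hom ≫ (A.X ◁ MonObj.mul (X := A.X))

namespace CategoryTheory.MonObj

variable {C : Type*} [Category C] [MonoidalCategory C] {X Y : C} [MonObj X] [MonObj Y]
  {i : X ⟶ Y} {r : Y ⟶ X}

lemma retract_section_comp_mul [IsMonHom r] (hir : i ≫ r = 𝟙 X) {σ : Y ⟶ Y ⊗ Y}
    (hσ : σ ≫ μ = 𝟙 Y) : (i ≫ σ ≫ (r ⊗ₘ r)) ≫ μ = 𝟙 X := by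
  simp only [Category.assoc, ← IsMonHom.mul_hom, reassoc_of% hσ, hir]

lemma mul_comp_retract_section_left [IsMonHom i] [IsMonHom r] (hir : i ≫ r = 𝟙 X)
    {σ : Y ⟶ Y ⊗ Y} (hσ : μ ≫ σ = (Y ◁ σ) ≫ (α_ Y Y Y).inv ≫ (μ ▷ Y)) :
    μ ≫ i ≫ σ ≫ (r ⊗ₘ r) = (X ◁ (i ≫ σ ≫ (r ⊗ₘ r))) ≫ (α_ X X X).inv ≫ (μ ▷ X) := by
  have hr : (μ ▷ Y) ≫ (r ⊗ₘ r) = ((r ⊗ₘ r) ⊗ₘ r) ≫ (μ ▷ X) := by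
    rw [← tensorHom_id, ← tensorHom_id, tensorHom_comp_tensorHom, tensorHom_comp_tensorHom,
      IsMonHom.mul_hom, Category.id_comp, Category.comp_id]
  calc μ ≫ i ≫ σ ≫ (r ⊗ₘ r)
      = (i ⊗ₘ i) ≫ (Y ◁ σ) ≫ (α_ Y Y Y).inv ≫ (μ ▷ Y) ≫ (r ⊗ₘ r) := by
        rw [IsMonHom.mul_hom_assoc, reassoc_of% hσ]
    _ = (i ⊗ₘ (i ≫ σ)) ≫ (r ⊗ₘ (r ⊗ₘ r)) ≫ (α_ X X X).inv ≫ (μ ▷ X) := by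
        rw [hr, associator_inv_naturality_assoc, ← id_tensorHom, tensorHom_comp_tensorHom_assoc,
          Category.comp_id]
    _ = (X ◁ (i ≫ σ ≫ (r ⊗ₘ r))) ≫ (α_ X X X).inv ≫ (μ ▷ X) := by
        rw [tensorHom_comp_tensorHom_assoc, hir, id_tensorHom, Category.assoc]

lemma mul_comp_retract_section_right [IsMonHom i] [IsMonHom r] (hir : i ≫ r = 𝟙 X)
    {σ : Y ⟶ Y ⊗ Y} (hσ : μ ≫ σ = (σ ▷ Y) ≫ (α_ Y Y Y).hom ≫ (Y ◁ μ)) :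
    μ ≫ i ≫ σ ≫ (r ⊗ₘ r) = ((i ≫ σ ≫ (r ⊗ₘ r)) ▷ X) ≫ (α_ X X X).hom ≫ (X ◁ μ) := by
  have hr : (Y ◁ μ) ≫ (r ⊗ₘ r) = (r ⊗ₘ (r ⊗ₘ r)) ≫ (X ◁ μ) := by
    rw [← id_tensorHom, ← id_tensorHom, tensorHom_comp_tensorHom, tensorHom_comp_tensorHom,
      IsMonHom.mul_hom, Category.id_comp, Category.comp_id]
  calc μ ≫ i ≫ σ ≫ (r ⊗ₘ r)
      = (i ⊗ₘ i) ≫ (σ ▷ Y) ≫ (α_ Y Y Y).hom ≫ (Y ◁ μ) ≫ (r ⊗ₘ r) := by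
        rw [IsMonHom.mul_hom_assoc, reassoc_of% hσ]
    _ = ((i ≫ σ) ⊗ₘ i) ≫ ((r ⊗ₘ r) ⊗ₘ r) ≫ (α_ X X X).hom ≫ (X ◁ μ) := by
        rw [hr, associator_naturality_assoc, ← tensorHom_id, tensorHom_comp_tensorHom_assoc,
          Category.comp_id]
    _ = ((i ≫ σ ≫ (r ⊗ₘ r)) ▷ X) ≫ (α_ X X X).hom ≫ (X ◁ μ) := by
        rw [tensorHom_comp_tensorHom_assoc, hir, tensorHom_id, Category.assoc]

end CategoryTheory.MonObj

/-- If there is a retraction diagram `A ⟶ B ⟶ A` in `Mon_ C` and `B` is separable,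
then `A` is separable. -/
theorem Mon_.IsSeparable.of_retract {C : Type*} [Category C] [MonoidalCategory C]
    {A B : Mon C} (i : A ⟶ B) (r : B ⟶ A) (hir : i ≫ r = 𝟙 A)
    (hB : Mon_.IsSeparable B) : Mon_.IsSeparable A := by
  obtain ⟨σ, hσ, hσ_left, hσ_right⟩ := hB
  have hir' : i.hom ≫ r.hom = 𝟙 A.X := congrArg Mon.Hom.hom hir
  exact ⟨i.hom ≫ σ ≫ (r.hom ⊗ₘ r.hom), MonObj.retract_section_comp_mul hir' hσ,
    MonObj.mul_comp_retract_section_left hir' hσ_left,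
    MonObj.mul_comp_retract_section_right hir' hσ_right⟩
end

section
/- Let C be a monoidal category, A a separable monoid object in C, and f : M ⟶ N a morphism of left A-module objects. If the underlying morphism of f in C admits a retraction in C, then f admits a retraction in the category of A-module objects; similarly, if the underlying morphism of f admits a section in C, then f admits a section in the category of A-module objects. -/
open CategoryTheory MonoidalCategory

/-!
Separability provides `e = η ≫ σ = ∑ e₁ ⊗ e₂` with `∑ e₁ e₂ = 1` and, by bimodule linearity
of `σ`, `∑ a e₁ ⊗ e₂ = σ a = ∑ e₁ ⊗ e₂ a`.
Averaging any morphism `k` of `C` between modules to `n ↦ ∑ e₁ k (e₂ n)` then yields a module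
morphism, which commutes with composition by module morphisms on either side and fixes the identity.
Averaging a retraction (resp. section) of `f` in `C` therefore gives one in modules.
-/

open scoped CategoryTheory.MonObj

section

variable {C : Type*} [Category C] [MonoidalCategory C]

namespace CategoryTheory.MonObj

variable {A : C} [MonObj A]

/-- `e = ∑ e₁ ⊗ e₂` is central in the `A`-bimodule `A ⊗ A`: `∑ e₁ ⊗ e₂ a = ∑ a e₁ ⊗ e₂`. -/
def IsCentral (e : 𝟙_ C ⟶ A ⊗ A) : Prop :=
  (λ_ A).inv ≫ e ▷ A ≫ (α_ A A A).hom ≫ A ◁ μ = (ρ_ A).inv ≫ A ◁ e ≫ (α_ A A A).inv ≫ μ ▷ A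

end CategoryTheory.MonObj

namespace CategoryTheory.ModObj

variable {A : C} [MonObj A]

/-- For `e = ∑ e₁ ⊗ e₂`, the morphism `x ↦ ∑ e₁ • k (e₂ • x)`. -/
def average (e : 𝟙_ C ⟶ A ⊗ A) {X Y : C} [ModObj A X] [ModObj A Y] (k : X ⟶ Y) : X ⟶ Y :=
  (λ_ X).inv ≫ e ▷ X ≫ (α_ A A X).hom ≫ A ◁ (γ[A, X] ≫ k) ≫ γ[A, Y]

variable (e : 𝟙_ C ⟶ A ⊗ A) {W X Y Z : C} [ModObj A W] [ModObj A X] [ModObj A Y] [ModObj A Z]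

lemma comp_average (g : W ⟶ X) [IsModHom A g] (k : X ⟶ Y) :
    g ≫ average e k = average e (g ≫ k) := by
  rw [average, average, IsModHom.smul_hom_assoc, selfLeftAction_actionHomRight,
    whiskerLeft_comp_assoc A (A ◁ g), ← associator_naturality_right_assoc,
    ← whisker_exchange_assoc, leftUnitor_inv_naturality_assoc]

lemma average_comp (k : X ⟶ Y) (g : Y ⟶ Z) [IsModHom A g] :
    average e k ≫ g = average e (k ≫ g) := by
  simp only [average, Category.assoc, IsModHom.smul_hom, selfLeftAction_actionHomRight,
    whiskerLeft_comp_assoc]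

lemma average_id (he : e ≫ μ = η) : average e (𝟙 X) = 𝟙 X := by
  simp only [average, Category.comp_id, ModObj.mul_smul_self_flip, Iso.hom_inv_id_assoc,
    ← comp_whiskerRight_assoc, he]
  simp

lemma smul_average (k : X ⟶ Y) :
    γ[A, X] ≫ average e k =
      ((λ_ A).inv ≫ e ▷ A ≫ (α_ A A A).hom ≫ A ◁ μ) ▷ X ≫ (α_ A A X).hom ≫
        A ◁ (γ[A, X] ≫ k) ≫ γ[A, Y] := by
  rw [average, leftUnitor_inv_naturality_assoc, whisker_exchange_assoc,
    associator_naturality_right_assoc, ← whiskerLeft_comp_assoc,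
    ModObj.mul_smul_self_flip_assoc]
  monoidal

lemma whiskerLeft_average_smul (k : X ⟶ Y) :
    A ◁ average e k ≫ γ[A, Y] =
      ((ρ_ A).inv ≫ A ◁ e ≫ (α_ A A A).inv ≫ μ ▷ A) ▷ X ≫ (α_ A A X).hom ≫
        A ◁ (γ[A, X] ≫ k) ≫ γ[A, Y] := by
  rw [average]
  generalize γ[A, X] ≫ k = h
  rw [whiskerLeft_comp_assoc, whiskerLeft_comp_assoc, whiskerLeft_comp_assoc,
    whiskerLeft_comp_assoc, ModObj.mul_smul_self_flip, associator_inv_naturality_right_assoc,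
    whisker_exchange_assoc]
  monoidal

variable {e} in
lemma smul_comp_average (he : MonObj.IsCentral e) (k : X ⟶ Y) :
    γ[A, X] ≫ average e k = A ◁ average e k ≫ γ[A, Y] := by
  rw [smul_average, whiskerLeft_average_smul, he]

end CategoryTheory.ModObj

theorem Mon_.IsSeparable.exists_comp_mul_eq_one_and_isCentral {A : Mon C}
    (hA : Mon_.IsSeparable A) :
    ∃ e : 𝟙_ C ⟶ A.X ⊗ A.X, e ≫ μ = η ∧ MonObj.IsCentral e := by
  obtain ⟨σ, hσ, hσ_left, hσ_right⟩ := hA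
  have h_right : (λ_ A.X).inv ≫ (η ≫ σ) ▷ A.X ≫ (α_ _ _ _).hom ≫ A.X ◁ μ = σ := by
    rw [comp_whiskerRight_assoc, ← hσ_right, MonObj.one_mul_assoc, Iso.inv_hom_id_assoc]
  have h_left : (ρ_ A.X).inv ≫ A.X ◁ (η ≫ σ) ≫ (α_ _ _ _).inv ≫ μ ▷ A.X = σ := by
    rw [whiskerLeft_comp_assoc, ← hσ_left, MonObj.mul_one_assoc, Iso.inv_hom_id_assoc]
  exact ⟨η ≫ σ, by rw [Category.assoc, hσ, Category.comp_id], h_right.trans h_left.symm⟩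

end

open CategoryTheory.ModObj in
/-- Over a separable monoid object, a morphism of module objects whose underlying
morphism admits a retraction (resp. a section) in `C` admits a retraction (resp. a
section) in the category of module objects. -/
theorem Mod_.section_retraction_of_underlying {C : Type*} [Category C] [MonoidalCategory C]
    {A : Mon C} (hA : Mon_.IsSeparable A) {M N : Mod C A.X} (f : M ⟶ N) :
    ((∃ r : N.X ⟶ M.X, f.hom ≫ r = 𝟙 M.X) → ∃ R : N ⟶ M, f ≫ R = 𝟙 M) ∧
    ((∃ s : N.X ⟶ M.X, s ≫ f.hom = 𝟙 N.X) → ∃ S : N ⟶ M, S ≫ f = 𝟙 N) := by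
  obtain ⟨e, he_unit, he_central⟩ := hA.exists_comp_mul_eq_one_and_isCentral
  constructor
  · rintro ⟨r, hr⟩
    refine ⟨Mod.Hom.mk' (average e r) (smul_comp_average he_central r), Mod.hom_ext _ _ ?_⟩
    change f.hom ≫ average e r = 𝟙 M.X
    rw [comp_average, hr, average_id e he_unit]
  · rintro ⟨s, hs⟩
    refine ⟨Mod.Hom.mk' (average e s) (smul_comp_average he_central s), Mod.hom_ext _ _ ?_⟩
    change average e s ≫ f.hom = 𝟙 N.X
    rw [average_comp, hs, average_id e he_unit]
end

section
/- Let C be a cartesian monoidal category (the tensor product is the categorical product and the unit 𝟙 is a terminal object). If A is a separable monoid object in C, then the unique morphism A ⟶ 𝟙 is an isomorphism; in other words, the only separable monoid object in a cartesian monoidal category is the terminal one. -/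
/-!
Write `σ = lift σ₁ σ₂`. Composing the two bimodule conditions with the projections says
`σ₂ (a * b) = σ₂ b` and `σ₁ (a * b) = σ₁ a`; evaluating at `b = 1`, resp. `a = 1`, shows that both
components, hence `σ`, are constant: `σ = toUnit ≫ η ≫ σ`. Then `𝟙 = σ ≫ μ` factors through the
terminal object, so `η` is inverse to `toUnit`.
-/

open CategoryTheory MonoidalCategory

open CartesianMonoidalCategory SemiCartesianMonoidalCategory
open scoped MonObj

section

variable {C : Type*} [Category C]

lemma CategoryTheory.SemiCartesianMonoidalCategory.isIso_toUnit_of_toUnit_comp_eq_id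
    [SemiCartesianMonoidalCategory C] {X : C} (x : 𝟙_ C ⟶ X) (h : toUnit X ≫ x = 𝟙 X) :
    IsIso (toUnit X) :=
  ⟨x, h, toUnit_unique _ _⟩

namespace CategoryTheory.MonObj

variable [CartesianMonoidalCategory C] {M Z : C} [MonObj M]

lemma eq_toUnit_comp_one_comp_of_mul_comp_eq_snd_comp {f : M ⟶ Z}
    (hf : μ ≫ f = snd M M ≫ f) : f = toUnit M ≫ η ≫ f := by
  simpa using lift (𝟙 M) (toUnit M ≫ η) ≫= hf

lemma eq_toUnit_comp_one_comp_of_mul_comp_eq_fst_comp {f : M ⟶ Z}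
    (hf : μ ≫ f = fst M M ≫ f) : f = toUnit M ≫ η ≫ f := by
  simpa using lift (toUnit M ≫ η) (𝟙 M) ≫= hf

end CategoryTheory.MonObj

end

/-- In a cartesian monoidal category, the only separable monoid object is the terminal
one: the unique morphism from a separable monoid object to the unit is an isomorphism. -/
theorem Mon_.IsSeparable.isIso_toUnit {C : Type*} [Category C] [CartesianMonoidalCategory C]
    (A : Mon C) (hA : Mon_.IsSeparable A) :
    IsIso (SemiCartesianMonoidalCategory.toUnit A.X) := by
  obtain ⟨σ, hσμ, hσ_left, hσ_right⟩ := hA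
  have h₁ : μ ≫ σ ≫ fst _ _ = fst _ _ ≫ σ ≫ fst _ _ := by simpa using hσ_right =≫ fst _ _
  have h₂ : μ ≫ σ ≫ snd _ _ = snd _ _ ≫ σ ≫ snd _ _ := by simpa using hσ_left =≫ snd _ _
  have hσ : σ = toUnit A.X ≫ η ≫ σ := by
    ext
    · simpa using MonObj.eq_toUnit_comp_one_comp_of_mul_comp_eq_fst_comp h₁
    · simpa using MonObj.eq_toUnit_comp_one_comp_of_mul_comp_eq_snd_comp h₂
  exact isIso_toUnit_of_toUnit_comp_eq_id η (by simpa [hσμ] using (hσ =≫ μ).symm)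
end

section
/- Let C be a monoidal category, e an object of C and η : 𝟙 ⟶ e a morphism such that the whiskerings η ▷ e : 𝟙 ⊗ e ⟶ e ⊗ e and e ◁ η : e ⊗ 𝟙 ⟶ e ⊗ e are isomorphisms (e is an idempotent E₀-object). Let m be any object of C such that η ▷ m : 𝟙 ⊗ m ⟶ e ⊗ m and m ◁ η : m ⊗ 𝟙 ⟶ m ⊗ e are isomorphisms. Then precomposition with η induces a bijection from the set of morphisms Hom_C(e, m) to the set of morphisms Hom_C(𝟙, m). -/
open CategoryTheory MonoidalCategory

/-- If `(e, η)` is an idempotent `E₀`-object of a monoidal category (i.e. `η ▷ e` and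
`e ◁ η` are isomorphisms) and `m` is an object such that `η ▷ m` and `m ◁ η` are
isomorphisms, then precomposition with `η` is a bijection `Hom(e, m) ≃ Hom(𝟙, m)`. -/
theorem idempotent_precomp_bijective {C : Type*} [Category C] [MonoidalCategory C]
    (e m : C) (η : 𝟙_ C ⟶ e)
    (h₁ : IsIso (η ▷ e)) (h₂ : IsIso (e ◁ η))
    (h₃ : IsIso (η ▷ m)) (h₄ : IsIso (m ◁ η)) :
    Function.Bijective (fun f : e ⟶ m => η ≫ f) := by
  constructor
  · intro f f' h
    simp only at h
    have h2 : e ◁ η ≫ e ◁ f = e ◁ η ≫ e ◁ f' := by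
      rw [← MonoidalCategory.whiskerLeft_comp, ← MonoidalCategory.whiskerLeft_comp, h]
    have h3 : e ◁ f = e ◁ f' := (cancel_epi (e ◁ η)).1 h2
    have h4 : 𝟙_ C ◁ f ≫ η ▷ m = 𝟙_ C ◁ f' ≫ η ▷ m := by
      rw [whisker_exchange, whisker_exchange, h3]
    have h5 : 𝟙_ C ◁ f = 𝟙_ C ◁ f' := (cancel_mono (η ▷ m)).1 h4
    calc f = (λ_ e).inv ≫ 𝟙_ C ◁ f ≫ (λ_ m).hom := by
            rw [MonoidalCategory.leftUnitor_naturality, Iso.inv_hom_id_assoc]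
      _ = (λ_ e).inv ≫ 𝟙_ C ◁ f' ≫ (λ_ m).hom := by rw [h5]
      _ = f' := by rw [MonoidalCategory.leftUnitor_naturality, Iso.inv_hom_id_assoc]
  · intro g
    refine ⟨(ρ_ e).inv ≫ e ◁ g ≫ inv (η ▷ m) ≫ (λ_ m).hom, ?_⟩
    simp only
    have h6 : η ≫ (ρ_ e).inv = (ρ_ (𝟙_ C)).inv ≫ η ▷ 𝟙_ C := by
      rw [← cancel_mono (ρ_ e).hom]
      simp [MonoidalCategory.rightUnitor_naturality]
    rw [reassoc_of% h6, ← whisker_exchange_assoc, IsIso.hom_inv_id_assoc,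
      MonoidalCategory.leftUnitor_naturality, unitors_equal, Iso.inv_hom_id_assoc]
end

section
/- Let C be a monoidal category, e an object of C and η : 𝟙 ⟶ e a morphism such that η ▷ e and e ◁ η are isomorphisms. Then there exists a multiplication μ : e ⊗ e ⟶ e making (e, η, μ) a monoid object in C (i.e. satisfying left unitality, right unitality, and associativity), and this μ is unique: any two multiplications on e with unit η making e a monoid object coincide. -/
/-!
The left unit law `η ▷ e ≫ μ = λ` already forces `μ = (η ▷ e)⁻¹ ≫ λ`, which gives uniqueness.
For this `μ` the right unit law amounts to `λ⁻¹ ≫ η ▷ e = ρ⁻¹ ≫ e ◁ η`. Both sides agree after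
precomposition with `η` (each becomes `η ⊗ η`, as `λ_𝟙 = ρ_𝟙`), and a map `e ⟶ Y ⊗ e` is determined
by its precomposition with `η`: whiskering by `e` on the right loses nothing because `η ▷ e` is
epi, and whisker exchange against the iso `(Y ⊗ e) ◁ η` recovers the map. Associativity is
checked after precomposing with the iso `(η ▷ e) ▷ e`, where both sides reduce to unitors.
-/

open CategoryTheory MonoidalCategory

namespace CategoryTheory.MonoidalCategory

variable {C : Type*} [Category C] [MonoidalCategory C] {e : C} (η : 𝟙_ C ⟶ e)

theorem unit_comp_leftUnitor_inv_comp_whiskerRight :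
    η ≫ (λ_ e).inv ≫ η ▷ e = η ≫ (ρ_ e).inv ≫ e ◁ η := by
  rw [leftUnitor_inv_naturality_assoc, rightUnitor_inv_naturality_assoc, ← unitors_inv_equal,
    ← tensorHom_def', tensorHom_def, MonoidalCategory.whiskerRight_id]

variable [IsIso (η ▷ e)]

theorem eq_of_unit_comp_eq [IsIso (e ◁ η)] {Y : C} {f g : e ⟶ Y ⊗ e}
    (h : η ≫ f = η ≫ g) : f = g := by
  have hfg : f ▷ e = g ▷ e := by
    rw [← cancel_epi (η ▷ e), ← comp_whiskerRight, h, comp_whiskerRight]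
  have : IsIso ((Y ⊗ e) ◁ η) := by
    rw [tensor_whiskerLeft]
    infer_instance
  have hfg' : f ▷ 𝟙_ C = g ▷ 𝟙_ C := by
    rw [← cancel_mono ((Y ⊗ e) ◁ η), ← whisker_exchange, ← whisker_exchange, hfg]
  simpa [MonoidalCategory.whiskerRight_id] using hfg'

theorem leftUnitor_inv_comp_whiskerRight [IsIso (e ◁ η)] :
    (λ_ e).inv ≫ η ▷ e = (ρ_ e).inv ≫ e ◁ η :=
  eq_of_unit_comp_eq η (unit_comp_leftUnitor_inv_comp_whiskerRight η)

noncomputable def idempotentMul : e ⊗ e ⟶ e :=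
  inv (η ▷ e) ≫ (λ_ e).hom

theorem eq_idempotentMul {μ : e ⊗ e ⟶ e} (h : η ▷ e ≫ μ = (λ_ e).hom) :
    μ = idempotentMul η :=
  (IsIso.eq_inv_comp _).mpr h

@[simp]
theorem whiskerRight_comp_idempotentMul : η ▷ e ≫ idempotentMul η = (λ_ e).hom := by
  simp [idempotentMul]

theorem whiskerLeft_comp_idempotentMul [IsIso (e ◁ η)] :
    e ◁ η ≫ idempotentMul η = (ρ_ e).hom := by
  rw [← cancel_epi (ρ_ e).inv, ← Category.assoc, ← leftUnitor_inv_comp_whiskerRight]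
  simp

theorem idempotentMul_assoc :
    idempotentMul η ▷ e ≫ idempotentMul η =
      (α_ e e e).hom ≫ e ◁ idempotentMul η ≫ idempotentMul η := by
  rw [← cancel_epi ((η ▷ e) ▷ e), ← comp_whiskerRight_assoc, whiskerRight_comp_idempotentMul,
    associator_naturality_left_assoc, ← whisker_exchange_assoc, whiskerRight_comp_idempotentMul,
    leftUnitor_naturality, leftUnitor_tensor_hom]
  simp

end CategoryTheory.MonoidalCategory

/-- An idempotent `E₀`-object `(e, η)` of a monoidal category (i.e. `η ▷ e` and `e ◁ η`
are isomorphisms) carries a unique multiplication `μ : e ⊗ e ⟶ e` making `(e, η, μ)` a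
monoid object. -/
theorem idempotent_existsUnique_mul {C : Type*} [Category C] [MonoidalCategory C]
    (e : C) (η : 𝟙_ C ⟶ e) (h₁ : IsIso (η ▷ e)) (h₂ : IsIso (e ◁ η)) :
    ∃! μ : e ⊗ e ⟶ e,
      (η ▷ e) ≫ μ = (λ_ e).hom ∧ (e ◁ η) ≫ μ = (ρ_ e).hom ∧
      (μ ▷ e) ≫ μ = (α_ e e e).hom ≫ (e ◁ μ) ≫ μ :=
  ⟨idempotentMul η,
    ⟨whiskerRight_comp_idempotentMul η, whiskerLeft_comp_idempotentMul η, idempotentMul_assoc η⟩,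
    fun _ ⟨hμ, _⟩ => eq_idempotentMul η hμ⟩
end

section
/- Let C be a monoidal category and let (e, η, μ) and (e', η', μ') be monoid objects in C such that η ▷ e, e ◁ η, η' ▷ e' and e' ◁ η' are all isomorphisms (both are idempotent monoid objects). Then any morphism f : e ⟶ e' in C with η ≫ f = η' is automatically a morphism of monoid objects (it commutes with the multiplications), and there is at most one morphism f : e ⟶ e' in C with η ≫ f = η'. -/
open CategoryTheory MonoidalCategory MonObj

/-! If `η ▷ M` is invertible then so is `μ`, with inverse `λ⁻¹ ≫ η ▷ M`; since
`ρ⁻¹ ≫ M ◁ η` is also a section of `μ`, the two sections agree. A unit-preserving `f` is then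
determined by `f = ρ⁻¹ ≫ M ◁ η ≫ (f ⊗ g) ≫ μ = λ⁻¹ ≫ η ▷ M ≫ (f ⊗ g) ≫ μ = g`, and it preserves `μ`
because `μ ≫ f` and `(f ⊗ f) ≫ μ` agree after precomposing with the epimorphism `η ▷ M`. -/

namespace CategoryTheory.MonObj

variable {C : Type*} [Category C] [MonoidalCategory C] {M N : C} [MonObj M] [MonObj N]

lemma one_whiskerRight_tensorHom_mul {f : M ⟶ N} (hf : η[M] ≫ f = η[N]) (g : M ⟶ N) :
    η[M] ▷ M ≫ (f ⊗ₘ g) ≫ μ[N] = (λ_ M).hom ≫ g := by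
  rw [← tensorHom_id, tensorHom_comp_tensorHom_assoc, hf, Category.id_comp, one_mul_hom]

lemma whiskerLeft_one_tensorHom_mul (f : M ⟶ N) {g : M ⟶ N} (hg : η[M] ≫ g = η[N]) :
    M ◁ η[M] ≫ (f ⊗ₘ g) ≫ μ[N] = (ρ_ M).hom ≫ f := by
  rw [← id_tensorHom, tensorHom_comp_tensorHom_assoc, hg, Category.id_comp, mul_one_hom]

lemma isIso_mul_of_isIso_one_whiskerRight [IsIso (η[M] ▷ M)] : IsIso μ[M] := by
  rw [← IsIso.inv_hom_id_assoc (η[M] ▷ M) μ[M], one_mul]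
  infer_instance

lemma rightUnitor_inv_whiskerLeft_one [IsIso (η[M] ▷ M)] :
    (ρ_ M).inv ≫ M ◁ η[M] = (λ_ M).inv ≫ η[M] ▷ M := by
  have := isIso_mul_of_isIso_one_whiskerRight (M := M)
  simp only [← cancel_mono μ[M], Category.assoc, mul_one, one_mul, Iso.inv_hom_id]

lemma mul_comp_of_one_comp [IsIso (η[M] ▷ M)] {f : M ⟶ N} (hf : η[M] ≫ f = η[N]) :
    μ[M] ≫ f = (f ⊗ₘ f) ≫ μ[N] := by
  rw [← cancel_epi (η[M] ▷ M), one_mul_assoc, one_whiskerRight_tensorHom_mul hf]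

lemma hom_ext_of_one_comp [IsIso (η[M] ▷ M)] {f g : M ⟶ N} (hf : η[M] ≫ f = η[N])
    (hg : η[M] ≫ g = η[N]) : f = g :=
  calc f = (ρ_ M).inv ≫ M ◁ η[M] ≫ (f ⊗ₘ g) ≫ μ[N] := by
        rw [whiskerLeft_one_tensorHom_mul f hg, Iso.inv_hom_id_assoc]
    _ = (λ_ M).inv ≫ η[M] ▷ M ≫ (f ⊗ₘ g) ≫ μ[N] := by
        rw [reassoc_of% rightUnitor_inv_whiskerLeft_one]
    _ = g := by rw [one_whiskerRight_tensorHom_mul hf, Iso.inv_hom_id_assoc]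

end CategoryTheory.MonObj

theorem idempotent_mon_hom_unique_general {C : Type*} [Category C] [MonoidalCategory C]
    (M N : Mon C)
    (hM₁ : IsIso (MonObj.one (X := M.X) ▷ M.X)) :
    (∀ f : M.X ⟶ N.X, MonObj.one (X := M.X) ≫ f = MonObj.one (X := N.X) →
      MonObj.mul (X := M.X) ≫ f = (f ⊗ₘ f) ≫ MonObj.mul (X := N.X)) ∧
    (∀ f g : M.X ⟶ N.X, MonObj.one (X := M.X) ≫ f = MonObj.one (X := N.X) →
      MonObj.one (X := M.X) ≫ g = MonObj.one (X := N.X) → f = g) :=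
  ⟨fun _ hf => mul_comp_of_one_comp hf, fun _ _ hf hg => hom_ext_of_one_comp hf hg⟩

/-- Given two idempotent monoid objects `M`, `N` in a monoidal category (i.e. the
whiskerings of their units are isomorphisms), any morphism of underlying objects
compatible with the units is automatically a morphism of monoid objects, and there is at
most one morphism of underlying objects compatible with the units. -/
theorem idempotent_mon_hom_unique {C : Type*} [Category C] [MonoidalCategory C]
    (M N : Mon C)
    (hM₁ : IsIso (MonObj.one (X := M.X) ▷ M.X)) (hM₂ : IsIso (M.X ◁ MonObj.one (X := M.X)))
    (hN₁ : IsIso (MonObj.one (X := N.X) ▷ N.X)) (hN₂ : IsIso (N.X ◁ MonObj.one (X := N.X))) :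
    (∀ f : M.X ⟶ N.X, MonObj.one (X := M.X) ≫ f = MonObj.one (X := N.X) →
      MonObj.mul (X := M.X) ≫ f = (f ⊗ₘ f) ≫ MonObj.mul (X := N.X)) ∧
    (∀ f g : M.X ⟶ N.X, MonObj.one (X := M.X) ≫ f = MonObj.one (X := N.X) →
      MonObj.one (X := M.X) ≫ g = MonObj.one (X := N.X) → f = g) :=
  idempotent_mon_hom_unique_general M N hM₁
end

section
/- Let C be a preadditive monoidal category with a zero object in which tensoring is additive in each variable (`MonoidalPreadditive`). Suppose the unit object 𝟙 is a binary biproduct of objects a and b: there are morphisms p_a : 𝟙 ⟶ a, p_b : 𝟙 ⟶ b, i_a : a ⟶ 𝟙, i_b : b ⟶ 𝟙 with i_a ≫ p_a = 𝟙_a, i_b ≫ p_b = 𝟙_b, i_a ≫ p_b = 0, i_b ≫ p_a = 0, and p_a ≫ i_a + p_b ≫ i_b = 𝟙. Then a ⊗ b and b ⊗ a are zero objects (their identity morphisms are zero), and the projections make a and b idempotent E₀-objects: p_a ▷ a, a ◁ p_a, p_b ▷ b and b ◁ p_b are isomorphisms. -/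
open CategoryTheory MonoidalCategory Limits

lemma aux_unit_mid {C : Type*} [Category C] [MonoidalCategory C] {X Y : C}
    (f : X ⟶ 𝟙_ C) (g : 𝟙_ C ⟶ Y) :
    f ▷ (𝟙_ C) ≫ (𝟙_ C) ◁ g = (ρ_ X).hom ≫ (f ≫ g) ≫ (λ_ Y).inv := by
  simp [MonoidalCategory.whiskerRight_id, MonoidalCategory.id_whiskerLeft,
    MonoidalCategory.unitors_inv_equal, MonoidalCategory.unitors_equal]

lemma aux_tensor_zero {C : Type*} [Category C] [MonoidalCategory C]
    [Preadditive C] {a b : C} (pb : 𝟙_ C ⟶ b) (ia : a ⟶ 𝟙_ C) (ib : b ⟶ 𝟙_ C)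
    (pa : 𝟙_ C ⟶ a)
    (h₁ : ia ≫ pa = 𝟙 a) (h₂ : ib ≫ pb = 𝟙 b) (h₃ : ia ≫ pb = 0) :
    𝟙 (a ⊗ b) = 0 := by
  have e : 𝟙 (a ⊗ b) = (a ◁ ib) ≫ ((a ◁ pb) ≫ (ia ▷ b)) ≫ (pa ▷ b) := by
    have : (a ◁ ib) ≫ (a ◁ pb) ≫ (ia ▷ b) ≫ (pa ▷ b)
        = (a ◁ (ib ≫ pb)) ≫ ((ia ≫ pa) ▷ b) := by
      simp [MonoidalCategory.whiskerLeft_comp, MonoidalCategory.comp_whiskerRight]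
    simp only [Category.assoc]
    rw [this, h₁, h₂]
    simp
  rw [whisker_exchange, aux_unit_mid, h₃] at e
  simp at e
  exact e

/-- If the unit of a preadditive monoidal category with a zero object decomposes as a
biproduct of objects `a` and `b`, then `a ⊗ b` and `b ⊗ a` are zero objects and the
projections make `a` and `b` idempotent `E₀`-objects. -/
theorem unit_biproduct_idempotents {C : Type*} [Category C] [MonoidalCategory C]
    [Preadditive C] [MonoidalPreadditive C] [HasZeroObject C]
    (a b : C) (pa : 𝟙_ C ⟶ a) (pb : 𝟙_ C ⟶ b) (ia : a ⟶ 𝟙_ C) (ib : b ⟶ 𝟙_ C)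
    (h₁ : ia ≫ pa = 𝟙 a) (h₂ : ib ≫ pb = 𝟙 b)
    (h₃ : ia ≫ pb = 0) (h₄ : ib ≫ pa = 0)
    (h₅ : pa ≫ ia + pb ≫ ib = 𝟙 (𝟙_ C)) :
    IsZero (a ⊗ b) ∧ IsZero (b ⊗ a) ∧
    IsIso (pa ▷ a) ∧ IsIso (a ◁ pa) ∧ IsIso (pb ▷ b) ∧ IsIso (b ◁ pb) := by
  have zab : 𝟙 (a ⊗ b) = 0 := aux_tensor_zero pb ia ib pa h₁ h₂ h₃
  have zba : 𝟙 (b ⊗ a) = 0 := aux_tensor_zero pa ib ia pb h₂ h₁ h₄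
  refine ⟨(IsZero.iff_id_eq_zero _).2 zab, (IsZero.iff_id_eq_zero _).2 zba, ?_, ?_, ?_, ?_⟩
  · refine ⟨ia ▷ a, ?_, by rw [← comp_whiskerRight, h₁]; simp⟩
    have h0 : (pb ≫ ib) ▷ a = 0 := by
      rw [comp_whiskerRight, show ib ▷ a = 𝟙 (b ⊗ a) ≫ ib ▷ a by simp, zba]
      simp
    calc pa ▷ a ≫ ia ▷ a = (pa ≫ ia + pb ≫ ib) ▷ a := by
          rw [MonoidalPreadditive.add_whiskerRight, h0, add_zero, comp_whiskerRight]
      _ = 𝟙 _ := by rw [h₅]; simp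
  · refine ⟨a ◁ ia, ?_, by rw [← MonoidalCategory.whiskerLeft_comp, h₁]; simp⟩
    have h0 : a ◁ (pb ≫ ib) = 0 := by
      rw [MonoidalCategory.whiskerLeft_comp,
        show a ◁ ib = 𝟙 (a ⊗ b) ≫ a ◁ ib by simp, zab]
      simp
    calc a ◁ pa ≫ a ◁ ia = a ◁ (pa ≫ ia + pb ≫ ib) := by
          rw [MonoidalPreadditive.whiskerLeft_add, h0, add_zero,
            MonoidalCategory.whiskerLeft_comp]
      _ = 𝟙 _ := by rw [h₅]; simp
  · refine ⟨ib ▷ b, ?_, by rw [← comp_whiskerRight, h₂]; simp⟩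
    have h0 : (pa ≫ ia) ▷ b = 0 := by
      rw [comp_whiskerRight, show ia ▷ b = 𝟙 (a ⊗ b) ≫ ia ▷ b by simp, zab]
      simp
    calc pb ▷ b ≫ ib ▷ b = (pa ≫ ia + pb ≫ ib) ▷ b := by
          rw [MonoidalPreadditive.add_whiskerRight, h0, zero_add, comp_whiskerRight]
      _ = 𝟙 _ := by rw [h₅]; simp
  · refine ⟨b ◁ ib, ?_, by rw [← MonoidalCategory.whiskerLeft_comp, h₂]; simp⟩
    have h0 : b ◁ (pa ≫ ia) = 0 := by
      rw [MonoidalCategory.whiskerLeft_comp,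
        show b ◁ ia = 𝟙 (b ⊗ a) ≫ b ◁ ia by simp, zba]
      simp
    calc b ◁ pb ≫ b ◁ ib = b ◁ (pa ≫ ia + pb ≫ ib) := by
          rw [MonoidalPreadditive.whiskerLeft_add, h0, zero_add,
            MonoidalCategory.whiskerLeft_comp]
      _ = 𝟙 _ := by rw [h₅]; simp
end

section
/- Let R and S be commutative rings and f : R →+* S a ring homomorphism admitting an R-linear section: viewing S as an R-module via f, there is an R-linear map s : S →ₗ[R] R with f(s(x)) = x for all x ∈ S. Then S is the localization of R at an idempotent: there exists an idempotent element u ∈ R such that, regarding S as an R-algebra via f, S is the localization of R away from u (`IsLocalization.Away u S`). -/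
/-! With `u := s 1`, linearity gives `s (algebraMap R S r) = r * u`; applying this to `r = u` and
using `algebraMap R S u = 1` shows `u` is idempotent. The section makes `algebraMap R S`
surjective, and two elements of `R` have the same image in `S` exactly when they agree after
multiplication by `u`. -/

namespace LinearMap

variable {R S : Type*} [CommSemiring R] [Semiring S] [Algebra R S]

theorem apply_algebraMap (s : S →ₗ[R] R) (r : R) : s (algebraMap R S r) = r * s 1 := by
  rw [Algebra.algebraMap_eq_smul_one, map_smul, smul_eq_mul]

variable {s : S →ₗ[R] R} (hs : Function.LeftInverse (algebraMap R S) s)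
include hs

theorem isIdempotentElem_apply_one_of_leftInverse : IsIdempotentElem (s 1) := by
  have h := s.apply_algebraMap (s 1)
  rw [hs 1] at h
  exact h.symm

theorem algebraMap_eq_iff_of_leftInverse (x y : R) :
    algebraMap R S x = algebraMap R S y ↔ s 1 * x = s 1 * y := by
  refine ⟨fun h ↦ ?_, fun h ↦ ?_⟩
  · simpa [apply_algebraMap, mul_comm] using congrArg s h
  · simpa [hs 1] using congrArg (algebraMap R S) h

end LinearMap

/-- If a ring homomorphism of commutative rings `R → S` admits an `R`-linear section
(viewing `S` as an `R`-module via the homomorphism), then `S` is the localization of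
`R` away from an idempotent element. -/
theorem isLocalization_away_of_linear_section {R S : Type*} [CommRing R] [CommRing S]
    [Algebra R S] (s : S →ₗ[R] R) (hs : ∀ x : S, algebraMap R S (s x) = x) :
    ∃ u : R, IsIdempotentElem u ∧ IsLocalization.Away u S := by
  have hidem := LinearMap.isIdempotentElem_apply_one_of_leftInverse hs
  exact ⟨s 1, hidem, IsLocalization.away_of_isIdempotentElem_of_mul hidem
    (LinearMap.algebraMap_eq_iff_of_leftInverse hs) (Function.LeftInverse.surjective hs)⟩
end

section
/- Let R be a commutative ring and A a commutative R-algebra admitting a separability idempotent e ∈ A ⊗[R] A. Then e is an idempotent element of the ring A ⊗[R] A, and the multiplication map A ⊗[R] A → A (the R-algebra homomorphism determined by a ⊗ₜ b ↦ a * b) exhibits A as the localization of A ⊗[R] A away from e: regarding A as an (A ⊗[R] A)-algebra via the multiplication map, `IsLocalization.Away e A` holds. -/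
open scoped TensorProduct

/-!
For commutative `A`, the relation `(a ⊗ 1) e = e (1 ⊗ a)` lets `e` absorb every left tensor
factor into the right one, so `e t = e (1 ⊗ μ t)` for all `t`, where `μ` is multiplication.
Taking `t = e` and using `μ e = 1` gives `e² = e`. The same identity shows that
`μ x = μ y ↔ e x = e y`, since conversely `μ (e x) = μ x`; as `μ` is surjective, this is
exactly the statement that `μ` is the localization away from the idempotent `e`.
-/

structure IsSeparabilityIdempotent (R : Type*) {A : Type*} [CommSemiring R] [Semiring A]
    [Algebra R A] (e : A ⊗[R] A) : Prop where
  mul'_eq_one : LinearMap.mul' R A e = 1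
  tmul_one_mul : ∀ a : A, (a ⊗ₜ[R] (1 : A)) * e = e * ((1 : A) ⊗ₜ[R] a)

section

variable {R A : Type*} [CommSemiring R] [CommSemiring A] [Algebra R A] {e : A ⊗[R] A}

open Algebra.TensorProduct

theorem mul_eq_mul_one_tmul_lmul' (he : ∀ a : A, (a ⊗ₜ[R] (1 : A)) * e = e * ((1 : A) ⊗ₜ[R] a))
    (t : A ⊗[R] A) : e * t = e * ((1 : A) ⊗ₜ[R] lmul' R t) := by
  induction t using TensorProduct.induction_on with
  | zero => simp
  | tmul a b =>
    calc e * (a ⊗ₜ[R] b) = (a ⊗ₜ[R] (1 : A)) * e * ((1 : A) ⊗ₜ[R] b) := by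
          rw [mul_comm _ e, mul_assoc, tmul_mul_tmul, one_mul, mul_one]
      _ = e * ((1 : A) ⊗ₜ[R] lmul' R (a ⊗ₜ[R] b)) := by
          rw [he, mul_assoc, tmul_mul_tmul, one_mul, lmul'_apply_tmul]
  | add x y hx hy => rw [mul_add, hx, hy, map_add, TensorProduct.tmul_add, mul_add]

namespace IsSeparabilityIdempotent

theorem lmul'_eq_one (he : IsSeparabilityIdempotent R e) : lmul' R e = 1 :=
  he.mul'_eq_one

theorem isIdempotentElem (he : IsSeparabilityIdempotent R e) : IsIdempotentElem e := by
  have := mul_eq_mul_one_tmul_lmul' he.tmul_one_mul e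
  rwa [he.lmul'_eq_one, ← one_def, mul_one] at this

theorem lmul'_eq_iff (he : IsSeparabilityIdempotent R e) (x y : A ⊗[R] A) :
    lmul' R x = lmul' R y ↔ e * x = e * y := by
  have lmul'_mul_left (t : A ⊗[R] A) : lmul' R (e * t) = lmul' R t := by
    rw [map_mul, he.lmul'_eq_one, one_mul]
  constructor
  · intro h
    rw [mul_eq_mul_one_tmul_lmul' he.tmul_one_mul x, mul_eq_mul_one_tmul_lmul' he.tmul_one_mul y,
      h]
  · intro h
    rw [← lmul'_mul_left x, h, lmul'_mul_left]

theorem isLocalization_away (he : IsSeparabilityIdempotent R e) :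
    letI : Algebra (A ⊗[R] A) A := (lmul' R (S := A)).toRingHom.toAlgebra
    IsLocalization.Away e A :=
  letI : Algebra (A ⊗[R] A) A := (lmul' R (S := A)).toRingHom.toAlgebra
  IsLocalization.away_of_isIdempotentElem_of_mul he.isIdempotentElem he.lmul'_eq_iff
    fun a ↦ ⟨a ⊗ₜ[R] 1, mul_one a⟩

end IsSeparabilityIdempotent

end

/-- If `e` is a separability idempotent of a commutative `R`-algebra `A`, then `e` is an
idempotent element of `A ⊗[R] A` and the multiplication map `A ⊗[R] A → A` exhibits `A`
as the localization of `A ⊗[R] A` away from `e`. -/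
theorem separabilityIdempotent_isLocalization_away {R A : Type*} [CommRing R] [CommRing A]
    [Algebra R A] (e : A ⊗[R] A)
    (he₁ : LinearMap.mul' R A e = 1)
    (he₂ : ∀ a : A, (a ⊗ₜ[R] (1 : A)) * e = e * ((1 : A) ⊗ₜ[R] a)) :
    IsIdempotentElem e ∧
      (letI : Algebra (A ⊗[R] A) A :=
        (Algebra.TensorProduct.lmul' R (S := A)).toRingHom.toAlgebra
       IsLocalization.Away e A) :=
  have he : IsSeparabilityIdempotent R e := ⟨he₁, he₂⟩
  ⟨he.isIdempotentElem, he.isLocalization_away⟩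
end

section
/- Let k be a commutative ring, R a commutative k-algebra which is separable over k, and A an R-algebra (hence also a k-algebra, with the scalar tower k → R → A, where R maps into the center of A). Then A is separable as a k-algebra if and only if A is separable as an R-algebra. -/
open scoped TensorProduct

/-- An associative unital `R`-algebra `A` (over a commutative ring `R`) is *separable*
if it admits a separability idempotent: an element `e` of `A ⊗[R] A` mapped to `1` by
the multiplication and satisfying `(a ⊗ 1) * e = e * (1 ⊗ a)` for all `a`. -/
def IsSeparableAlgebra (R A : Type*) [CommRing R] [Ring A] [Algebra R A] : Prop :=
  ∃ e : A ⊗[R] A, LinearMap.mul' R A e = 1 ∧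
    ∀ a : A, (a ⊗ₜ[R] (1 : A)) * e = e * ((1 : A) ⊗ₜ[R] a)

section Aux

variable {k R A : Type*} [CommRing k] [CommRing R] [Ring A]
    [Algebra k R] [Algebra k A] [Algebra R A] [IsScalarTower k R A]

/-- The canonical additive map `A ⊗[k] A →+ A ⊗[R] A`. -/
noncomputable def sepTau : A ⊗[k] A →+ A ⊗[R] A :=
  TensorProduct.liftAddHom
    (AddMonoidHom.mk' (fun x => AddMonoidHom.mk' (fun y => x ⊗ₜ[R] y)
        (fun y₁ y₂ => TensorProduct.tmul_add x y₁ y₂))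
      (fun x₁ x₂ => AddMonoidHom.ext fun y => TensorProduct.add_tmul x₁ x₂ y))
    (fun c x y => by
      show ((c • x) ⊗ₜ[R] y) = x ⊗ₜ[R] (c • y)
      rw [← IsScalarTower.algebraMap_smul R c x, ← IsScalarTower.algebraMap_smul R c y,
        TensorProduct.smul_tmul])

@[simp] lemma sepTau_tmul (x y : A) : (sepTau (k := k) (R := R) (x ⊗ₜ[k] y)) = x ⊗ₜ[R] y := rfl

lemma sepTau_mul' (z : A ⊗[k] A) :
    LinearMap.mul' R A (sepTau (k := k) (R := R) z) = LinearMap.mul' k A z := by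
  induction z using TensorProduct.induction_on with
  | zero => simp
  | tmul x y => simp
  | add x y hx hy => simp [map_add, hx, hy]

lemma sepTau_left (a : A) (z : A ⊗[k] A) :
    (a ⊗ₜ[R] (1 : A)) * sepTau (k := k) (R := R) z
      = sepTau (k := k) (R := R) ((a ⊗ₜ[k] (1 : A)) * z) := by
  induction z using TensorProduct.induction_on with
  | zero => simp
  | tmul x y => simp [Algebra.TensorProduct.tmul_mul_tmul]
  | add x y hx hy => simp only [map_add, mul_add, hx, hy]

lemma sepTau_right (a : A) (z : A ⊗[k] A) :
    sepTau (k := k) (R := R) z * ((1 : A) ⊗ₜ[R] a)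
      = sepTau (k := k) (R := R) (z * ((1 : A) ⊗ₜ[k] a)) := by
  induction z using TensorProduct.induction_on with
  | zero => simp
  | tmul x y => simp [Algebra.TensorProduct.tmul_mul_tmul]
  | add x y hx hy => simp only [map_add, add_mul, hx, hy]

lemma sepMul_sandwich (x y : A) (w : A ⊗[k] A) :
    LinearMap.mul' k A ((x ⊗ₜ[k] (1 : A)) * w * ((1 : A) ⊗ₜ[k] y))
      = x * LinearMap.mul' k A w * y := by
  induction w using TensorProduct.induction_on with
  | zero => simp
  | tmul u v => simp [Algebra.TensorProduct.tmul_mul_tmul, mul_assoc]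
  | add u v hu hv => simp only [mul_add, add_mul, map_add, hu, hv]

end Aux

section Sigma

variable {k R A : Type*} [CommRing k] [CommRing R] [Ring A]
    [Algebra k R] [Algebra k A] [Algebra R A] [IsScalarTower k R A]
    (f : A ⊗[k] A)
    (hf : ∀ r : R, ((algebraMap R A r) ⊗ₜ[k] (1 : A)) * f = f * ((1 : A) ⊗ₜ[k] (algebraMap R A r)))

/-- The additive map `A ⊗[R] A →+ A ⊗[k] A`, `x ⊗ y ↦ (x ⊗ 1) * f * (1 ⊗ y)`. -/
noncomputable def sepSigma : A ⊗[R] A →+ A ⊗[k] A :=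
  TensorProduct.liftAddHom
    (AddMonoidHom.mk' (fun x => AddMonoidHom.mk'
        (fun y => (x ⊗ₜ[k] (1 : A)) * f * ((1 : A) ⊗ₜ[k] y))
        (fun y₁ y₂ => by
          show (x ⊗ₜ[k] (1 : A)) * f * ((1 : A) ⊗ₜ[k] (y₁ + y₂))
              = (x ⊗ₜ[k] (1 : A)) * f * ((1 : A) ⊗ₜ[k] y₁)
                + (x ⊗ₜ[k] (1 : A)) * f * ((1 : A) ⊗ₜ[k] y₂)
          rw [TensorProduct.tmul_add, mul_add]))
      (fun x₁ x₂ => AddMonoidHom.ext fun y => by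
        show ((x₁ + x₂) ⊗ₜ[k] (1 : A)) * f * ((1 : A) ⊗ₜ[k] y)
            = (x₁ ⊗ₜ[k] (1 : A)) * f * ((1 : A) ⊗ₜ[k] y)
              + (x₂ ⊗ₜ[k] (1 : A)) * f * ((1 : A) ⊗ₜ[k] y)
        rw [TensorProduct.add_tmul, add_mul, add_mul]))
    (fun r x y => by
      show (((r • x) ⊗ₜ[k] (1 : A)) * f * ((1 : A) ⊗ₜ[k] y))
          = (x ⊗ₜ[k] (1 : A)) * f * ((1 : A) ⊗ₜ[k] (r • y))
      have key : ((algebraMap R A r * x) ⊗ₜ[k] (1 : A)) * f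
          = (x ⊗ₜ[k] (1 : A)) * f * ((1 : A) ⊗ₜ[k] (algebraMap R A r)) := by
        rw [Algebra.commutes r x,
          show (x * algebraMap R A r) ⊗ₜ[k] (1 : A)
              = (x ⊗ₜ[k] (1 : A)) * ((algebraMap R A r) ⊗ₜ[k] (1 : A)) by
            rw [Algebra.TensorProduct.tmul_mul_tmul, one_mul],
          mul_assoc, hf r, ← mul_assoc]
      rw [Algebra.smul_def r x, Algebra.smul_def r y, key, mul_assoc,
        Algebra.TensorProduct.tmul_mul_tmul, one_mul])

@[simp] lemma sepSigma_tmul (x y : A) :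
    sepSigma f hf (x ⊗ₜ[R] y) = (x ⊗ₜ[k] (1 : A)) * f * ((1 : A) ⊗ₜ[k] y) := rfl

lemma sepSigma_mul' (hf1 : LinearMap.mul' k A f = 1) (z : A ⊗[R] A) :
    LinearMap.mul' k A (sepSigma f hf z) = LinearMap.mul' R A z := by
  induction z using TensorProduct.induction_on with
  | zero => simp
  | tmul x y => rw [sepSigma_tmul, sepMul_sandwich, hf1, mul_one, LinearMap.mul'_apply]
  | add x y hx hy => simp only [map_add, hx, hy]

lemma sepSigma_left (a : A) (z : A ⊗[R] A) :
    (a ⊗ₜ[k] (1 : A)) * sepSigma f hf z = sepSigma f hf ((a ⊗ₜ[R] (1 : A)) * z) := by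
  induction z using TensorProduct.induction_on with
  | zero => simp
  | tmul x y =>
      rw [sepSigma_tmul, Algebra.TensorProduct.tmul_mul_tmul, sepSigma_tmul, ← mul_assoc,
        ← mul_assoc, Algebra.TensorProduct.tmul_mul_tmul, one_mul, one_mul]
  | add x y hx hy => simp only [map_add, mul_add, hx, hy]

lemma sepSigma_right (a : A) (z : A ⊗[R] A) :
    sepSigma f hf z * ((1 : A) ⊗ₜ[k] a) = sepSigma f hf (z * ((1 : A) ⊗ₜ[R] a)) := by
  induction z using TensorProduct.induction_on with
  | zero => simp
  | tmul x y =>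
      rw [sepSigma_tmul, Algebra.TensorProduct.tmul_mul_tmul, sepSigma_tmul, mul_assoc,
        Algebra.TensorProduct.tmul_mul_tmul, one_mul, mul_one]
  | add x y hx hy => simp only [map_add, add_mul, hx, hy]

end Sigma

/-- If `R` is a separable commutative `k`-algebra and `A` is an `R`-algebra (so that
`k → R → A` is a scalar tower, `R` landing in the center of `A`), then `A` is separable
over `k` if and only if it is separable over `R`. -/
theorem isSeparableAlgebra_tower_iff {k R A : Type*} [CommRing k] [CommRing R] [Ring A]
    [Algebra k R] [Algebra k A] [Algebra R A] [IsScalarTower k R A]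
    (hR : IsSeparableAlgebra k R) :
    IsSeparableAlgebra k A ↔ IsSeparableAlgebra R A := by
  constructor
  · rintro ⟨e, he1, he2⟩
    refine ⟨sepTau (k := k) (R := R) e, by rw [sepTau_mul', he1], fun a => ?_⟩
    rw [sepTau_left, sepTau_right, he2]
  · rintro ⟨eA, g1, g2⟩
    obtain ⟨eR, h1, h2⟩ := hR
    set φ : R ⊗[k] R →ₐ[k] A ⊗[k] A :=
      Algebra.TensorProduct.map (IsScalarTower.toAlgHom k R A) (IsScalarTower.toAlgHom k R A)
      with hφ
    set f : A ⊗[k] A := φ eR with hfdef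
    have hmulφ : ∀ z : R ⊗[k] R,
        LinearMap.mul' k A (φ z) = algebraMap R A (LinearMap.mul' k R z) := by
      intro z
      induction z using TensorProduct.induction_on with
      | zero => simp
      | tmul x y => simp [hφ, Algebra.TensorProduct.map_tmul]
      | add x y hx hy => simp only [map_add, hx, hy]
    have hf1 : LinearMap.mul' k A f = 1 := by
      rw [hfdef, hmulφ, h1, map_one]
    have hf : ∀ r : R,
        ((algebraMap R A r) ⊗ₜ[k] (1 : A)) * f = f * ((1 : A) ⊗ₜ[k] (algebraMap R A r)) := by
      intro r
      have := congrArg φ (h2 r)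
      rw [map_mul, map_mul] at this
      simpa [hφ, Algebra.TensorProduct.map_tmul] using this
    refine ⟨sepSigma f hf eA, by rw [sepSigma_mul' f hf hf1, g1], fun a => ?_⟩
    rw [sepSigma_left, sepSigma_right, g2]
end

section
/- Let C be a symmetric monoidal category and A a monoid object in C (multiplication μ : A ⊗ A ⟶ A, unit η : 𝟙 ⟶ A) whose underlying object has a right dual Aᘁ, with coevaluation coev : 𝟙 ⟶ A ⊗ Aᘁ and evaluation ev : Aᘁ ⊗ A ⟶ 𝟙 satisfying the zigzag identities (an exact pairing). Define the trace form t : A ⟶ 𝟙 as the composite A ≅ A ⊗ 𝟙 ⟶(A ◁ coev) A ⊗ (A ⊗ Aᘁ) ≅(associator) (A ⊗ A) ⊗ Aᘁ ⟶(μ ▷ Aᘁ) A ⊗ Aᘁ ≅(braiding) Aᘁ ⊗ A ⟶(ev) 𝟙. Then the trace pairing μ ≫ t : A ⊗ A ⟶ 𝟙 is symmetric: (β_{A,A}).hom ≫ μ ≫ t = μ ≫ t, where β_{A,A} is the braiding on A ⊗ A. -/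
open CategoryTheory MonoidalCategory

/-- The trace form of a monoid object `A` with a right dual `Aᘁ` (exact pairing given by
`coev : 𝟙 ⟶ A ⊗ Aᘁ` and `ev : Aᘁ ⊗ A ⟶ 𝟙`), namely the composite
`A ≅ A ⊗ 𝟙 ⟶ A ⊗ (A ⊗ Aᘁ) ≅ (A ⊗ A) ⊗ Aᘁ ⟶ A ⊗ Aᘁ ≅ Aᘁ ⊗ A ⟶ 𝟙`. -/
noncomputable def Mon_.traceForm {C : Type*} [Category C] [MonoidalCategory C]
    [SymmetricCategory C] (A : Mon C) (Ad : C) [ExactPairing A.X Ad] :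
    A.X ⟶ 𝟙_ C :=
  (ρ_ A.X).inv ≫ (A.X ◁ η_ A.X Ad) ≫ (α_ A.X A.X Ad).inv ≫ (A.mon.mul ▷ Ad) ≫
    (β_ A.X Ad).hom ≫ ε_ A.X Ad

/-!
With `coev = Σ c₁ ⊗ c₂`, let `ℓ : A ⟶ A ⊗ Aᘁ`, `x ↦ Σ x c₁ ⊗ c₂`, be the left regular
representation, read in `A ⊗ Aᘁ ≅ End A`. Then `t = ℓ ≫ β ≫ ev` is the trace of `ℓ`, and by
associativity and a zigzag identity `ℓ (x y) = ℓ x ∘ ℓ y`, so `t (x y) = tr (ℓ x ∘ ℓ y)`.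
The pairing `(a ⊗ φ, b ⊗ ψ) ↦ tr ((a ⊗ φ) ∘ (b ⊗ ψ)) = φ b · ψ a` on `A ⊗ Aᘁ` is symmetric: it is
the cyclic shift `a φ b ψ ↦ φ b ψ a` followed by `ev ⊗ ev`; in a symmetric category shifting
twice is the block swap, and the swap of `𝟙 ⊗ 𝟙` is the identity.
-/

namespace CategoryTheory

open BraidedCategory

variable {C : Type*} [Category C] [MonoidalCategory C]

/-- For `h = ev`, this is composition in `X ⊗ Y ≅ End X`. -/
def MonoidalCategory.contractMid {X Y : C} (h : Y ⊗ X ⟶ 𝟙_ C) :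
    (X ⊗ Y) ⊗ (X ⊗ Y) ⟶ X ⊗ Y :=
  (α_ X Y (X ⊗ Y)).hom ≫ X ◁ ((α_ Y X Y).inv ≫ h ▷ Y ≫ (λ_ Y).hom)

namespace BraidedCategory

variable [BraidedCategory C]

def rotate (X Y : C) : (X ⊗ Y) ⊗ (X ⊗ Y) ⟶ (Y ⊗ X) ⊗ (Y ⊗ X) :=
  (α_ X Y (X ⊗ Y)).hom ≫ (β_ X (Y ⊗ (X ⊗ Y))).hom ≫ (α_ Y (X ⊗ Y) X).hom ≫
    Y ◁ (α_ X Y X).hom ≫ (α_ Y X (Y ⊗ X)).inv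

theorem braiding_comp_tensorHom_of_toUnit {X Y : C} (f : X ⟶ 𝟙_ C) (g : Y ⟶ 𝟙_ C) :
    (β_ X Y).hom ≫ (g ⊗ₘ f) = f ⊗ₘ g := by
  rw [← braiding_naturality, braiding_tensorUnit_left, unitors_equal]
  simp

theorem contractMid_comp_braiding_comp_eq_rotate_comp {X Y : C} (h : Y ⊗ X ⟶ 𝟙_ C) :
    contractMid h ≫ (β_ X Y).hom ≫ h = rotate X Y ≫ (h ⊗ₘ h) ≫ (λ_ (𝟙_ C)).hom := by
  simp only [contractMid, rotate, Category.assoc, braiding_naturality_right_assoc]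
  rw [MonoidalCategory.tensorHom_def h h]
  monoidal

end BraidedCategory

namespace SymmetricCategory

variable [SymmetricCategory C]

theorem braiding_tensor_left_hom_eq_braiding_comp_braiding (X Y Z : C) :
    (β_ (X ⊗ Y) Z).hom = (α_ X Y Z).hom ≫ (β_ X (Y ⊗ Z)).hom ≫ (α_ Y Z X).hom ≫
      (β_ Y (Z ⊗ X)).hom ≫ (α_ Z X Y).hom := by
  simp only [braiding_tensor_right_hom, braiding_tensor_left_hom, Category.assoc,
    Iso.hom_inv_id_assoc, yang_baxter_assoc]
  rw [← whiskerLeft_comp_assoc, symmetry, whiskerLeft_id, Category.id_comp, Iso.inv_hom_id,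
    Category.comp_id]

theorem rotate_comp_rotate (X Y : C) :
    rotate X Y ≫ rotate Y X = (β_ (X ⊗ Y) (X ⊗ Y)).hom := by
  rw [braiding_tensor_left_hom_eq_braiding_comp_braiding]
  simp only [rotate, Category.assoc, Iso.inv_hom_id_assoc, braiding_naturality_right_assoc]
  monoidal

theorem braiding_comp_contractMid_comp_braiding_comp {X Y : C} (h : Y ⊗ X ⟶ 𝟙_ C) :
    (β_ (X ⊗ Y) (X ⊗ Y)).hom ≫ contractMid h ≫ (β_ X Y).hom ≫ h =
      contractMid h ≫ (β_ X Y).hom ≫ h := by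
  rw [contractMid_comp_braiding_comp_eq_rotate_comp, ← rotate_comp_rotate, Category.assoc,
    ← Category.assoc (rotate Y X), rotate_comp_rotate,
    reassoc_of% braiding_comp_tensorHom_of_toUnit]

end SymmetricCategory

end CategoryTheory

namespace Mon_

variable {C : Type*} [Category C] [MonoidalCategory C] (A : Mon C) (Ad : C) [ExactPairing A.X Ad]

def leftRegular : A.X ⟶ A.X ⊗ Ad :=
  (ρ_ A.X).inv ≫ A.X ◁ η_ A.X Ad ≫ (α_ A.X A.X Ad).inv ≫ A.mon.mul ▷ Ad

theorem traceForm_eq_leftRegular_comp [SymmetricCategory C] :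
    traceForm A Ad = leftRegular A Ad ≫ (β_ A.X Ad).hom ≫ ε_ A.X Ad := by
  simp [traceForm, leftRegular]

theorem leftRegular_whiskerRight_comp_contractMid :
    leftRegular A Ad ▷ (A.X ⊗ Ad) ≫ contractMid (ε_ A.X Ad) =
      (α_ A.X A.X Ad).inv ≫ A.mon.mul ▷ Ad :=
  calc leftRegular A Ad ▷ (A.X ⊗ Ad) ≫ contractMid (ε_ A.X Ad)
    _ = 𝟙 _ ⊗≫ A.X ◁ η_ A.X Ad ▷ (A.X ⊗ Ad) ⊗≫
          (A.mon.mul ▷ (Ad ⊗ A.X) ≫ A.X ◁ ε_ A.X Ad) ▷ Ad ⊗≫ 𝟙 _ := by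
      simp only [leftRegular, contractMid]; monoidal
    _ = 𝟙 _ ⊗≫ A.X ◁ (η_ A.X Ad ▷ A.X ⊗≫ A.X ◁ ε_ A.X Ad) ▷ Ad ⊗≫ A.mon.mul ▷ Ad ⊗≫ 𝟙 _ := by
      rw [← whisker_exchange]; monoidal
    _ = (α_ A.X A.X Ad).inv ≫ A.mon.mul ▷ Ad := by
      rw [ExactPairing.evaluation_coevaluation'']; monoidal

theorem mul_comp_leftRegular :
    A.mon.mul ≫ leftRegular A Ad =
      (leftRegular A Ad ⊗ₘ leftRegular A Ad) ≫ contractMid (ε_ A.X Ad) := by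
  rw [tensorHom_def'_assoc, leftRegular_whiskerRight_comp_contractMid]
  calc A.mon.mul ≫ leftRegular A Ad
    _ = 𝟙 _ ⊗≫ (A.mon.mul ▷ 𝟙_ C ≫ A.X ◁ η_ A.X Ad) ⊗≫ A.mon.mul ▷ Ad := by
      simp only [leftRegular]; monoidal
    _ = 𝟙 _ ⊗≫ (A.X ⊗ A.X) ◁ η_ A.X Ad ⊗≫ (A.mon.mul ▷ A.X ≫ A.mon.mul) ▷ Ad ⊗≫ 𝟙 _ := by
      rw [← whisker_exchange]; monoidal
    _ = A.X ◁ leftRegular A Ad ≫ (α_ A.X A.X Ad).inv ≫ A.mon.mul ▷ Ad := by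
      rw [MonObj.mul_assoc]; simp only [leftRegular]; monoidal

end Mon_

/-- In a symmetric monoidal category, the trace pairing `μ ≫ t : A ⊗ A ⟶ 𝟙` of a monoid
object `A` with dualizable underlying object is symmetric: it is invariant under
precomposition with the braiding. -/
theorem Mon_.tracePairing_symm {C : Type*} [Category C] [MonoidalCategory C]
    [SymmetricCategory C] (A : Mon C) (Ad : C) [ExactPairing A.X Ad] :
    (β_ A.X A.X).hom ≫ A.mon.mul ≫ Mon_.traceForm A Ad = A.mon.mul ≫ Mon_.traceForm A Ad := by
  rw [traceForm_eq_leftRegular_comp, reassoc_of% mul_comp_leftRegular,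
    ← BraidedCategory.braiding_naturality_assoc,
    SymmetricCategory.braiding_comp_contractMid_comp_braiding_comp]
end
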